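/- Let k be a field of characteristic p > 0 and G a commutative k-algebra. For any derivation X : A → A of a commutative k-algebra A, the p-fold composite X^p = X ∘ ⋯ ∘ X (p times) is again a derivation of A. -/

import Mathlib

/-!
Iterating the Leibniz rule gives `D^[n] (a * b) = ∑ (n choose i) D^[i] a * D^[n-i] b`. For `n = p`
prime every binomial coefficient other than the two outer ones is divisible by `p`, so in
characteristic `p` only `a * D^[p] b + D^[p] a * b` survives.
-/

open Finset

namespace Derivation

section Iterate

variable {R A : Type*} [CommSemiring R] [CommSemiring A] [Algebra R A] (D : Derivation R A A)

theorem iterate_leibniz (n : ℕ) (a b : A) :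
    D^[n] (a * b) = ∑ ij ∈ antidiagonal n, n.choose ij.1 • (D^[ij.1] a * D^[ij.2] b) := by
  induction n with
  | zero => simp
  | succ n ih =>
    rw [sum_antidiagonal_choose_succ_nsmul (fun i j ↦ D^[i] a * D^[j] b) n]
    simp only [Function.iterate_succ_apply', ih, map_sum, map_nsmul, leibniz, smul_eq_mul,
      smul_add, sum_add_distrib]
    congr 1
    refine sum_congr rfl fun ⟨i, j⟩ hij ↦ ?_
    rw [n.choose_symm_of_eq_add (mem_antidiagonal.1 hij).symm, mul_comm]

theorem iterate_prime_leibniz {p : ℕ} (hp : p.Prime) (hpA : (p : A) = 0) (a b : A) :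
    D^[p] (a * b) = a * D^[p] b + D^[p] a * b := by
  rw [iterate_leibniz, sum_eq_add_of_mem (0, p) (p, 0) (by simp) (by simp)
    (by simp [hp.ne_zero])]
  · simp [add_comm]
  · rintro ⟨i, j⟩ hij ⟨hi, hj⟩
    have hij : i + j = p := mem_antidiagonal.1 hij
    simp only [ne_eq, Prod.mk.injEq] at hi hj
    obtain ⟨c, hc⟩ := hp.dvd_choose_self (k := i) (by omega) (by omega)
    simp [hc, nsmul_eq_mul, hpA]

end Iterate

variable {R A : Type*} [CommSemiring R] [CommRing A] [Algebra R A]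

def powPrime (D : Derivation R A A) {p : ℕ} (hp : p.Prime) (hpA : (p : A) = 0) :
    Derivation R A A :=
  mk' ((D : A →ₗ[R] A) ^ p) fun a b ↦ by
    simpa [Module.End.pow_apply, mul_comm] using D.iterate_prime_leibniz hp hpA a b

theorem powPrime_apply (D : Derivation R A A) {p : ℕ} (hp : p.Prime) (hpA : (p : A) = 0)
    (a : A) : D.powPrime hp hpA a = ((D : A →ₗ[R] A) ^ p) a :=
  rfl

end Derivation

/-- Over a field `k` of characteristic `p > 0`, the `p`-fold composite of a
derivation `X : A → A` of a commutative `k`-algebra `A` is again a derivation. -/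
theorem pow_p_derivation (p : ℕ) (hp : p.Prime)
    (k : Type*) [Field k] [CharP k p]
    (A : Type*) [CommRing A] [Algebra k A] (X : Derivation k A A) :
    ∃ D : Derivation k A A, ∀ a : A, D a = ((X.toLinearMap : A →ₗ[k] A) ^ p) a := by
  have hpA : (p : A) = 0 := by
    rw [← map_natCast (algebraMap k A), CharP.cast_eq_zero k p, map_zero]
  exact ⟨X.powPrime hp hpA, X.powPrime_apply hp hpA⟩
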